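/- Let (h, e, f) be an sl₂-triple of matrices in Matₘ(ℂ). Then for every B ∈ Matₘ(ℂ) and all natural numbers k ≥ 1 and ℓ ≥ 1, one has tr((f^k·B − B·f^k)·(f^(ℓ−1)·e − e·f^(ℓ−1))) = 2(ℓ−1)·k·tr(B·f^(k+ℓ−2)). -/

import Mathlib

/-!
By invariance of the trace form, `tr(⁅f^k, B⁆ ⁅f^(ℓ-1), e⁆) = tr(B ⁅⁅f^(ℓ-1), e⁆, f^k⁆)`.
Since `ad h` and `ad e` are derivations, `⁅h, f^k⁆ = -2k f^k` and
`⁅e, f^(j+1)⁆ = (j+1) h f^j + (j+1) j f^j`; the second term commutes with `f^k`, so the double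
bracket is `2(j+1)k f^(k+j)`, with `j = ℓ - 2`.
-/

open Matrix

/-- `(h, e, f)` is an `sl₂`-triple of matrices: `⁅h,e⁆ = 2e`, `⁅h,f⁆ = -2f`, `⁅e,f⁆ = h`. -/
def IsSl2TripleM {m : ℕ} (h e f : Matrix (Fin m) (Fin m) ℂ) : Prop :=
  h * e - e * h = (2 : ℂ) • e ∧ h * f - f * h = (-2 : ℂ) • f ∧ e * f - f * e = h

section Ring

variable {A : Type*} [Ring A]

theorem Ring.lie_mul (a b c : A) : ⁅a, b * c⁆ = ⁅a, b⁆ * c + b * ⁅a, c⁆ := by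
  simp only [Ring.lie_def, sub_mul, mul_sub, mul_assoc]
  abel

theorem Ring.mul_lie (a b c : A) : ⁅a * b, c⁆ = a * ⁅b, c⁆ + ⁅a, c⁆ * b := by
  simp only [Ring.lie_def, sub_mul, mul_sub, mul_assoc]
  abel

end Ring

section Sl2

variable {R A : Type*} [CommRing R] [Ring A] [Algebra R A] {h e f : A}

theorem lie_pow_of_lie_eq_smul {c : R} (hhf : ⁅h, f⁆ = c • f) (n : ℕ) :
    ⁅h, f ^ n⁆ = (n * c) • f ^ n := by
  induction n with
  | zero => simp [Ring.lie_def]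
  | succ n ih =>
    rw [pow_succ, Ring.lie_mul, ih, hhf, smul_mul_assoc, mul_smul_comm, ← add_smul]
    push_cast
    ring_nf

theorem lie_pow_succ_of_lie_eq (hef : ⁅e, f⁆ = h) (hhf : ⁅h, f⁆ = (-2 : R) • f) (n : ℕ) :
    ⁅e, f ^ (n + 1)⁆ = (n + 1 : R) • (h * f ^ n) + ((n + 1) * n : R) • f ^ n := by
  induction n with
  | zero => simp [hef]
  | succ n ih =>
    have hfh : f ^ (n + 1) * h = h * f ^ (n + 1) + (2 * (n + 1) : R) • f ^ (n + 1) := by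
      have := lie_pow_of_lie_eq_smul hhf (n + 1)
      rw [Ring.lie_def] at this
      rw [← sub_eq_iff_eq_add', ← neg_sub, this]
      push_cast
      module
    rw [pow_succ _ (n + 1), Ring.lie_mul, ih, hef, hfh, add_mul, smul_mul_assoc,
      smul_mul_assoc, mul_assoc, ← pow_succ]
    push_cast
    module

theorem lie_lie_pow_pow (hef : ⁅e, f⁆ = h) (hhf : ⁅h, f⁆ = (-2 : R) • f) (j k : ℕ) :
    ⁅⁅f ^ (j + 1), e⁆, f ^ k⁆ = (2 * (j + 1) * k : R) • f ^ (k + j) := by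
  have hexpand : ⁅⁅f ^ (j + 1), e⁆, f ^ k⁆ =
      -((j + 1 : R) • ⁅h * f ^ j, f ^ k⁆ + ((j + 1) * j : R) • ⁅f ^ j, f ^ k⁆) := by
    rw [Ring.lie_def (f ^ (j + 1)), ← neg_sub, ← Ring.lie_def, lie_pow_succ_of_lie_eq hef hhf]
    simp only [Ring.lie_def, neg_mul, mul_neg, add_mul, mul_add, smul_mul_assoc, mul_smul_comm,
      mul_assoc]
    module
  rw [hexpand, Ring.mul_lie, (Commute.pow_pow_self f j k).lie_eq, lie_pow_of_lie_eq_smul hhf,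
    smul_mul_assoc, ← pow_add, mul_zero]
  module

end Sl2

theorem Matrix.trace_lie_mul {n R : Type*} [Fintype n] [DecidableEq n] [CommRing R]
    (X B Y : Matrix n n R) : (⁅X, B⁆ * Y).trace = (B * ⁅Y, X⁆).trace := by
  simp only [Ring.lie_def, sub_mul, mul_sub, trace_sub, mul_assoc]
  rw [trace_mul_comm X, mul_assoc]

theorem trace_identity_sl2_general
    {m : ℕ} (h e f : Matrix (Fin m) (Fin m) ℂ) (hT : IsSl2TripleM h e f)
    (B : Matrix (Fin m) (Fin m) ℂ) (k ℓ : ℕ) :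
    ((f ^ k * B - B * f ^ k) * (f ^ (ℓ - 1) * e - e * f ^ (ℓ - 1))).trace =
      ((2 * (ℓ - 1) * k : ℕ) : ℂ) * (B * f ^ (k + ℓ - 2)).trace := by
  obtain ⟨-, hhf, hef⟩ := hT
  rw [← Ring.lie_def] at hhf hef
  rcases ℓ with _ | _ | j
  · simp
  · simp
  · calc _ = (B * ⁅⁅f ^ (j + 1), e⁆, f ^ k⁆).trace := by
          simpa only [Ring.lie_def, Nat.add_sub_cancel] using
            trace_lie_mul (f ^ k) B ⁅f ^ (j + 1), e⁆
      _ = _ := by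
          rw [lie_lie_pow_pow hef hhf, mul_smul_comm, trace_smul, smul_eq_mul]
          simp only [Nat.add_sub_cancel, show k + (j + 1 + 1) - 2 = k + j by omega]
          push_cast
          ring

/-- The trace identity `tr(⁅f^k, B⁆ ⁅f^(ℓ-1), e⁆) = 2(ℓ-1)k · tr(B f^(k+ℓ-2))` for an
`sl₂`-triple `(h, e, f)` of matrices. -/
theorem trace_identity_sl2
    {m : ℕ} (h e f : Matrix (Fin m) (Fin m) ℂ) (hT : IsSl2TripleM h e f)
    (B : Matrix (Fin m) (Fin m) ℂ) (k ℓ : ℕ) (hk : 1 ≤ k) (hℓ : 1 ≤ ℓ) :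
    ((f ^ k * B - B * f ^ k) * (f ^ (ℓ - 1) * e - e * f ^ (ℓ - 1))).trace =
      ((2 * (ℓ - 1) * k : ℕ) : ℂ) * (B * f ^ (k + ℓ - 2)).trace :=
  trace_identity_sl2_general h e f hT B k ℓ
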